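/- arXiv:1905.06132 — 6 statements merged into one kernel-verified Lean document; each statement's English description precedes it below -/
import Mathlib

section
/- The kernel of B is exactly the column space of Cᵀ: for x ∈ ℝ^M, B·x = 0 if and only if there exists y ∈ ℝ^n with x = Cᵀ·y. -/
open Matrix

/-- With `D = diagonal d` (entries positive) and `C·D·Cᵀ` invertible,
the kernel of `B = D·Cᵀ·(C·D·Cᵀ)⁻¹·C·D − D` is exactly the column space of `Cᵀ`:
`B·x = 0` iff `x = Cᵀ·y` for some `y ∈ ℝ^n`. -/
theorem B_kernel_eq_colSpace
    (n M : ℕ) (C : Matrix (Fin n) (Fin M) ℝ) (d : Fin M → ℝ)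
    (hd : ∀ m, 0 < d m)
    (hinv : IsUnit (C * Matrix.diagonal d * Cᵀ)) :
    ∀ x : Fin M → ℝ,
      (Matrix.diagonal d * Cᵀ * (C * Matrix.diagonal d * Cᵀ)⁻¹ * C * Matrix.diagonal d
        - Matrix.diagonal d) *ᵥ x = 0 ↔ ∃ y : Fin n → ℝ, x = Cᵀ *ᵥ y := by
  intro x
  set D := Matrix.diagonal d with hDdef
  set A := C * D * Cᵀ with hAdef
  have hdet : IsUnit A.det := (Matrix.isUnit_iff_isUnit_det _).mp hinv
  have hAinv : A⁻¹ * A = 1 := Matrix.nonsing_inv_mul _ hdet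
  have hDdet : IsUnit D.det := by
    rw [hDdef, Matrix.det_diagonal]
    exact isUnit_iff_ne_zero.mpr (Finset.prod_ne_zero_iff.mpr fun m _ => (hd m).ne')
  have hDinv : D⁻¹ * D = 1 := Matrix.nonsing_inv_mul _ hDdet
  constructor
  · intro h
    rw [Matrix.sub_mulVec, sub_eq_zero] at h
    have h2 : (Cᵀ * A⁻¹ * C * D) *ᵥ x = x := by
      have := congrArg (fun v => D⁻¹ *ᵥ v) h
      simpa [Matrix.mulVec_mulVec, ← Matrix.mul_assoc, hDinv, Matrix.one_mulVec,
        mul_assoc D⁻¹ D] using this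
    refine ⟨(A⁻¹ * C * D) *ᵥ x, ?_⟩
    rw [Matrix.mulVec_mulVec, ← Matrix.mul_assoc, ← Matrix.mul_assoc, h2]
  · rintro ⟨y, rfl⟩
    rw [Matrix.mulVec_mulVec]
    have : (D * Cᵀ * A⁻¹ * C * D - D) * Cᵀ = 0 := by
      rw [Matrix.sub_mul]
      have : D * Cᵀ * A⁻¹ * C * D * Cᵀ = D * Cᵀ := by
        calc D * Cᵀ * A⁻¹ * C * D * Cᵀ = D * Cᵀ * (A⁻¹ * A) := by
              simp only [hAdef, Matrix.mul_assoc]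
          _ = D * Cᵀ := by rw [hAinv, Matrix.mul_one]
      rw [this, sub_self]
    rw [this, Matrix.zero_mulVec]
end

section
/- The rank of B equals M − n. -/
open Matrix

lemma my_rank_add_le {m M : ℕ} (A B : Matrix (Fin m) (Fin M) ℝ) :
    (A + B).rank ≤ A.rank + B.rank := by
  rw [Matrix.rank, Matrix.rank, Matrix.rank]
  have h : LinearMap.range (A + B).mulVecLin ≤
      LinearMap.range A.mulVecLin ⊔ LinearMap.range B.mulVecLin := by
    rintro _ ⟨x, rfl⟩
    have : (A + B).mulVecLin x = A.mulVecLin x + B.mulVecLin x := by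
      simp [Matrix.mulVecLin_apply, Matrix.add_mulVec]
    rw [this]
    exact Submodule.add_mem_sup (LinearMap.mem_range_self _ x) (LinearMap.mem_range_self _ x)
  exact (Submodule.finrank_mono h).trans
    (Submodule.finrank_add_le_finrank_add_finrank _ _)

lemma my_rank_neg {m M : ℕ} (A : Matrix (Fin m) (Fin M) ℝ) : (-A).rank = A.rank := by
  have h : -A = A * (-1 : Matrix (Fin M) (Fin M) ℝ) := by
    rw [Matrix.mul_neg, Matrix.mul_one]
  have hdet : IsUnit (-1 : Matrix (Fin M) (Fin M) ℝ).det := by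
    rw [show (-1 : Matrix (Fin M) (Fin M) ℝ) = -(1 : Matrix (Fin M) (Fin M) ℝ) from rfl,
      Matrix.det_neg, Matrix.det_one]
    simp [isUnit_iff_ne_zero]
  rw [h, Matrix.rank_mul_eq_left_of_isUnit_det _ _ hdet]

/-- With `D = diagonal d` (entries positive) and `C·D·Cᵀ` invertible,
the rank of `B = D·Cᵀ·(C·D·Cᵀ)⁻¹·C·D − D` equals `M − n`. -/
theorem B_rank
    (n M : ℕ) (C : Matrix (Fin n) (Fin M) ℝ) (d : Fin M → ℝ)
    (hd : ∀ m, 0 < d m)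
    (hinv : IsUnit (C * Matrix.diagonal d * Cᵀ)) :
    (Matrix.diagonal d * Cᵀ * (C * Matrix.diagonal d * Cᵀ)⁻¹ * C * Matrix.diagonal d
      - Matrix.diagonal d).rank = M - n := by
  classical
  set D := Matrix.diagonal d with hD
  set A := C * D * Cᵀ with hA
  set e : Fin M → ℝ := fun m => Real.sqrt (d m) with he
  set E := Matrix.diagonal e with hE
  have hee : (fun i => e i * e i) = d := funext fun m => Real.mul_self_sqrt (hd m).le
  have hE2 : E * E = D := by
    rw [hE, hD, diagonal_mul_diagonal, hee]
  have hEdet : IsUnit E.det := by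
    rw [hE, det_diagonal]
    exact isUnit_iff_ne_zero.mpr (Finset.prod_ne_zero_iff.mpr
      fun m _ => (Real.sqrt_pos.mpr (hd m)).ne')
  have hAdet : IsUnit A.det := (Matrix.isUnit_iff_isUnit_det A).mp hinv
  set F := E * Cᵀ * A⁻¹ * C * E with hF
  have hB : D * Cᵀ * A⁻¹ * C * D - D = E * (F - 1) * E := by
    have h1 : E * (F - 1) * E = E * F * E - E * E := by
      rw [Matrix.mul_sub, Matrix.mul_one, Matrix.sub_mul]
    rw [h1, hE2]
    congr 1
    rw [hF, ← hE2]
    simp only [Matrix.mul_assoc]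
  rw [hB, rank_mul_eq_left_of_isUnit_det _ _ hEdet,
    rank_mul_eq_right_of_isUnit_det _ _ hEdet]
  have hAE : (C * E) * (E * Cᵀ) = A := by
    rw [hA, ← hE2]; simp only [Matrix.mul_assoc]
  have hCEF : (C * E) * F = C * E := by
    rw [hF]
    calc (C * E) * (E * Cᵀ * A⁻¹ * C * E)
        = ((C * E) * (E * Cᵀ)) * A⁻¹ * (C * E) := by simp only [Matrix.mul_assoc]
      _ = A * A⁻¹ * (C * E) := by rw [hAE]
      _ = C * E := by rw [Matrix.mul_nonsing_inv A hAdet, Matrix.one_mul]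
  have hFF : F * F = F := by
    calc F * F = E * Cᵀ * A⁻¹ * ((C * E) * F) := by
          rw [hF]; simp only [Matrix.mul_assoc]
      _ = F := by rw [hCEF, hF]; simp only [Matrix.mul_assoc]
  have hrankA : A.rank = n := by
    rw [Matrix.rank_of_isUnit A hinv, Fintype.card_fin]
  have hrankCE : (C * E).rank = n := by
    refine le_antisymm ((C * E).rank_le_card_height.trans (Fintype.card_fin n).le) ?_
    calc n = A.rank := hrankA.symm
      _ = ((C * E) * (E * Cᵀ)).rank := by rw [hAE]
      _ ≤ (C * E).rank := Matrix.rank_mul_le_left _ _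
  have hrankF : F.rank = n := by
    refine le_antisymm ?_ ?_
    · calc F.rank = ((E * Cᵀ * A⁻¹) * (C * E)).rank := by
            rw [hF]; simp only [Matrix.mul_assoc]
        _ ≤ (C * E).rank := Matrix.rank_mul_le_right _ _
        _ = n := hrankCE
    · calc n = (C * E).rank := hrankCE.symm
        _ = ((C * E) * F).rank := by rw [hCEF]
        _ ≤ F.rank := Matrix.rank_mul_le_right _ _
  have h0 : F * (F - 1) = 0 := by
    rw [Matrix.mul_sub, hFF, Matrix.mul_one, sub_self]
  have hub : F.rank + (F - 1).rank ≤ M := by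
    have := Matrix.rank_add_rank_le_card_of_mul_eq_zero h0
    rwa [Fintype.card_fin] at this
  have hlb : M ≤ F.rank + (F - 1).rank := by
    have h1 : (1 : Matrix (Fin M) (Fin M) ℝ) = F + -(F - 1) := by noncomm_ring
    calc M = (1 : Matrix (Fin M) (Fin M) ℝ).rank := by
            rw [Matrix.rank_one, Fintype.card_fin]
      _ = (F + -(F - 1)).rank := by rw [← h1]
      _ ≤ F.rank + (-(F - 1)).rank := my_rank_add_le _ _
      _ = F.rank + (F - 1).rank := by rw [my_rank_neg]
  omega
end

section
/- Proposition: the matrix B = D·Cᵀ·(C·D·Cᵀ)⁻¹·C·D − D has the eigenvalue 0 with multiplicity exactly n, and its remaining M − n eigenvalues (counted with multiplicity) are all negative real numbers; equivalently, 0 is a root of the characteristic polynomial of B of multiplicity n and all other roots are negative reals. -/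
/-! With `Q = Cᵀ (C D Cᵀ)⁻¹ C D`, an idempotent of rank `n` that is self-adjoint for the
bilinear form of `D`, one has `-B = D (1 - Q) = (1 - Q)ᵀ D (1 - Q)`: positive semidefinite,
of rank `M - n`. Being symmetric, `B` has the characteristic polynomial `∏ (X - λᵢ)` over its
real eigenvalues `λᵢ ≤ 0`, exactly `rank B` of which are nonzero. -/

open Matrix Polynomial

namespace Matrix

variable {ι κ : Type*} [Fintype ι] [Fintype κ] [DecidableEq ι] [DecidableEq κ]

omit [DecidableEq ι] in
theorem isIdempotentElem_mul_nonsing_inv_mul {R : Type*} [CommRing R]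
    (X : Matrix ι κ R) (Y : Matrix κ ι R) (h : IsUnit (Y * X)) :
    IsIdempotentElem (X * (Y * X)⁻¹ * Y) := by
  calc X * (Y * X)⁻¹ * Y * (X * (Y * X)⁻¹ * Y)
      = X * ((Y * X)⁻¹ * (Y * X)) * (Y * X)⁻¹ * Y := by simp only [Matrix.mul_assoc]
    _ = X * (Y * X)⁻¹ * Y := by
      rw [nonsing_inv_mul _ ((isUnit_iff_isUnit_det _).mp h), Matrix.mul_one]

omit [DecidableEq ι] in
theorem rank_mul_nonsing_inv_mul {K : Type*} [Field K]
    (X : Matrix ι κ K) (Y : Matrix κ ι K) (h : IsUnit (Y * X)) :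
    (X * (Y * X)⁻¹ * Y).rank = Fintype.card κ := by
  set P := X * (Y * X)⁻¹ * Y
  refine le_antisymm ((rank_mul_le_left _ _).trans ((rank_mul_le_right _ _).trans
    (rank_le_card_width _))) ?_
  have hsandwich : Y * P * X = Y * X := by
    calc Y * P * X = Y * X * (Y * X)⁻¹ * (Y * X) := by simp only [P, Matrix.mul_assoc]
      _ = Y * X := by rw [mul_nonsing_inv _ ((isUnit_iff_isUnit_det _).mp h), Matrix.one_mul]
  calc Fintype.card κ = (Y * P * X).rank := by rw [hsandwich, rank_of_isUnit _ h]
    _ ≤ P.rank := (rank_mul_le_left _ _).trans (rank_mul_le_right _ _)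

theorem IsIdempotentElem.rank_one_sub_add_rank {K : Type*} [Field K] {Q : Matrix ι ι K}
    (hQ : IsIdempotentElem Q) : (1 - Q).rank + Q.rank = Fintype.card ι := by
  have hrange : LinearMap.range (1 - Q).mulVecLin = LinearMap.ker Q.mulVecLin := by
    have h := LinearMap.IsIdempotentElem.range_eq_ker_one_sub
      (hQ.one_sub.map (toLinAlgEquiv' (R := K)))
    rwa [← map_one toLinAlgEquiv', ← map_sub, sub_sub_cancel] at h
  have := LinearMap.finrank_range_add_finrank_ker Q.mulVecLin
  rw [Module.finrank_fintype_fun_eq_card] at this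
  rw [rank, rank, hrange]
  omega

theorem transpose_one_sub_mul_mul_one_sub {R : Type*} [CommRing R] {D Q : Matrix ι ι R}
    (hQ : IsIdempotentElem Q) (hQD : Qᵀ * D = D * Q) :
    (1 - Q)ᵀ * D * (1 - Q) = D * (1 - Q) := by
  rw [transpose_sub, transpose_one, Matrix.sub_mul, Matrix.one_mul, Matrix.sub_mul, hQD,
    Matrix.mul_assoc, hQ.mul_one_sub_self, Matrix.mul_zero, sub_zero]

theorem mul_transpose_mul_nonsing_inv_mul_mul_sub {R : Type*} [CommRing R]
    (C : Matrix κ ι R) (D : Matrix ι ι R) :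
    D * Cᵀ * (C * D * Cᵀ)⁻¹ * C * D - D = -D * (1 - Cᵀ * (C * D * Cᵀ)⁻¹ * (C * D)) := by
  simp only [Matrix.mul_sub, Matrix.mul_one, Matrix.neg_mul, Matrix.mul_assoc]
  abel

theorem rank_mul_transpose_nonsing_inv_mul_mul_sub_add_card {K : Type*} [Field K]
    (C : Matrix κ ι K) (D : Matrix ι ι K) (hD : IsUnit D) (hA : IsUnit (C * D * Cᵀ)) :
    (D * Cᵀ * (C * D * Cᵀ)⁻¹ * C * D - D).rank + Fintype.card κ = Fintype.card ι := by
  rw [mul_transpose_mul_nonsing_inv_mul_mul_sub,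
    rank_mul_eq_right_of_isUnit_det _ _ ((isUnit_iff_isUnit_det _).mp hD.neg),
    ← rank_mul_nonsing_inv_mul Cᵀ (C * D) hA]
  exact (isIdempotentElem_mul_nonsing_inv_mul Cᵀ (C * D) hA).rank_one_sub_add_rank

theorem posSemidef_sub_mul_transpose_mul_nonsing_inv_mul_mul
    (C : Matrix κ ι ℝ) {D : Matrix ι ι ℝ} (hD : D.PosSemidef) (hA : IsUnit (C * D * Cᵀ)) :
    (D - D * Cᵀ * (C * D * Cᵀ)⁻¹ * C * D).PosSemidef := by
  set Q := Cᵀ * (C * D * Cᵀ)⁻¹ * (C * D)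
  have hQ : IsIdempotentElem Q := isIdempotentElem_mul_nonsing_inv_mul Cᵀ (C * D) hA
  have hDT : Dᵀ = D := by simpa using hD.isHermitian.eq
  have hQD : Qᵀ * D = D * Q := by
    simp only [Q, transpose_mul, transpose_transpose, transpose_nonsing_inv, hDT,
      Matrix.mul_assoc]
  have hfactor : D - D * Cᵀ * (C * D * Cᵀ)⁻¹ * C * D = (1 - Q)ᴴ * D * (1 - Q) := by
    rw [conjTranspose_eq_transpose_of_trivial, transpose_one_sub_mul_mul_one_sub hQ hQD,
      ← neg_sub, mul_transpose_mul_nonsing_inv_mul_mul_sub, Matrix.neg_mul, neg_neg]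
  exact hfactor ▸ hD.conjTranspose_mul_mul_same _

open scoped ComplexOrder in
theorem IsHermitian.eigenvalues_nonpos_of_posSemidef_neg {𝕜 : Type*} [RCLike 𝕜]
    {S : Matrix ι ι 𝕜} (hS : S.IsHermitian) (h : (-S).PosSemidef) (i : ι) :
    hS.eigenvalues i ≤ 0 := by
  have hquad := h.dotProduct_mulVec_nonneg (hS.eigenvectorBasis i)
  rw [neg_mulVec, dotProduct_neg, neg_nonneg] at hquad
  rw [hS.eigenvalues_eq]
  exact (RCLike.nonpos_iff.mp hquad).1

theorem IsHermitian.roots_charpoly_map_algebraMap {S : Matrix ι ι ℝ} (hS : S.IsHermitian) :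
    (S.charpoly.map (algebraMap ℝ ℂ)).roots =
      Finset.univ.val.map (fun i ↦ (hS.eigenvalues i : ℂ)) := by
  rw [hS.charpoly_eq, Polynomial.map_prod, Polynomial.roots_prod]
  · simp
  · simp [Finset.prod_ne_zero_iff, Polynomial.X_sub_C_ne_zero]

theorem IsHermitian.rootMultiplicity_zero_charpoly_map_add_rank {S : Matrix ι ι ℝ}
    (hS : S.IsHermitian) :
    (S.charpoly.map (algebraMap ℝ ℂ)).rootMultiplicity 0 + S.rank = Fintype.card ι := by
  rw [← count_roots, hS.roots_charpoly_map_algebraMap, Multiset.count_map,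
    hS.rank_eq_card_non_zero_eigs, Fintype.card_subtype]
  simp only [eq_comm (a := (0 : ℂ)), Complex.ofReal_eq_zero]
  exact Finset.card_filter_add_card_filter_not _

theorem IsHermitian.im_eq_zero_and_re_neg_of_mem_roots_charpoly_map {S : Matrix ι ι ℝ}
    (hS : S.IsHermitian) (h : (-S).PosSemidef) {z : ℂ}
    (hz : z ∈ (S.charpoly.map (algebraMap ℝ ℂ)).roots) (hz0 : z ≠ 0) : z.im = 0 ∧ z.re < 0 := by
  rw [hS.roots_charpoly_map_algebraMap, Multiset.mem_map] at hz
  obtain ⟨i, -, rfl⟩ := hz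
  exact ⟨Complex.ofReal_im _,
    (hS.eigenvalues_nonpos_of_posSemidef_neg h i).lt_of_ne (by simpa using hz0)⟩

end Matrix

/-- With `D = diagonal d` (entries positive) and `C·D·Cᵀ` invertible, the
matrix `B = D·Cᵀ·(C·D·Cᵀ)⁻¹·C·D − D` has the eigenvalue `0` with multiplicity exactly
`n`, and its remaining `M − n` eigenvalues (counted with multiplicity as roots of its
characteristic polynomial, viewed over `ℂ`) are all negative real numbers. -/
theorem B_spectrum
    (n M : ℕ) (C : Matrix (Fin n) (Fin M) ℝ) (d : Fin M → ℝ)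
    (hd : ∀ m, 0 < d m)
    (hinv : IsUnit (C * Matrix.diagonal d * Cᵀ)) :
    ((Matrix.diagonal d * Cᵀ * (C * Matrix.diagonal d * Cᵀ)⁻¹ * C * Matrix.diagonal d
        - Matrix.diagonal d).charpoly.map (algebraMap ℝ ℂ)).rootMultiplicity 0 = n
    ∧ ∀ z ∈ ((Matrix.diagonal d * Cᵀ * (C * Matrix.diagonal d * Cᵀ)⁻¹ * C * Matrix.diagonal d
        - Matrix.diagonal d).charpoly.map (algebraMap ℝ ℂ)).roots,
        z ≠ 0 → z.im = 0 ∧ z.re < 0 := by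
  have hD : (diagonal d).PosDef := posDef_diagonal_iff.mpr hd
  set B := diagonal d * Cᵀ * (C * diagonal d * Cᵀ)⁻¹ * C * diagonal d - diagonal d
  have hnegB : (-B).PosSemidef := by
    rw [neg_sub]
    exact posSemidef_sub_mul_transpose_mul_nonsing_inv_mul_mul C hD.posSemidef hinv
  have hB : B.IsHermitian := by simpa using hnegB.isHermitian.neg
  have hrank : B.rank + n = M := by
    simpa using rank_mul_transpose_nonsing_inv_mul_mul_sub_add_card C _ hD.isUnit hinv
  refine ⟨?_, fun z hz hz0 ↦ hB.im_eq_zero_and_re_neg_of_mem_roots_charpoly_map hnegB hz hz0⟩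
  have := hB.rootMultiplicity_zero_charpoly_map_add_rank
  simp only [Fintype.card_fin] at this
  omega
end

section
/- The Jacobian J = B·D̄ has the eigenvalue 0 with algebraic multiplicity exactly n, and its remaining M − n eigenvalues (counted with multiplicity, as roots of its characteristic polynomial) are all negative real numbers. -/
/-!
Write `D = E²` and `D̄ = F²` with `E = √D`, `F = √D̄`. Then `B = E (P - 1) E`, where
`P = Kᵀ (K Kᵀ)⁻¹ K`, `K = C E`, is the orthogonal projection onto the row space of `K`, of
rank `n`. Since `charpoly (X F²) = charpoly (F X F)`, the Jacobian `J = B F²` has the same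
characteristic polynomial as the symmetric matrix `(E F)ᵀ (P - 1) (E F)`, which is negative
semidefinite because `1 - P` is a projection, and has rank `rank (1 - P) = M - n`. So all
eigenvalues of `J` are real and nonpositive, and exactly `n` of them vanish.
-/

open Matrix Polynomial
open scoped ComplexOrder MatrixOrder

namespace Matrix

variable {ι m R : Type*} [Fintype ι]

theorem rank_neg [Field R] [Fintype m] (A : Matrix m ι R) : (-A).rank = A.rank := by
  have : (-A).mulVecLin = -A.mulVecLin := by ext; simp
  rw [rank, rank, this, LinearMap.range_neg]

theorem rank_one_sub_add_rank [DecidableEq ι] [Field R] {P : Matrix ι ι R}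
    (hP : IsIdempotentElem P) : (1 - P).rank + P.rank = Fintype.card ι := by
  have hP' : IsIdempotentElem (toLinAlgEquiv' P) := hP.map toLinAlgEquiv'
  have h_one_sub : (1 - P).rank = Module.finrank R (LinearMap.range (1 - toLinAlgEquiv' P)) := by
    rw [← map_one toLinAlgEquiv', ← map_sub]; rfl
  rw [h_one_sub, ← LinearMap.IsIdempotentElem.ker_eq_range_one_sub hP', add_comm]
  exact (LinearMap.finrank_range_add_finrank_ker _).trans (Module.finrank_fintype_fun_eq_card R)

theorem diagonal_sqrt_mul_self [DecidableEq ι] {v : ι → ℝ} (hv : ∀ i, 0 ≤ v i) :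
    diagonal (fun i => √(v i)) * diagonal (fun i => √(v i)) = diagonal v := by
  rw [diagonal_mul_diagonal]
  exact congrArg diagonal (funext fun i => Real.mul_self_sqrt (hv i))

theorem isUnit_det_diagonal_sqrt [DecidableEq ι] {v : ι → ℝ} (hv : ∀ i, 0 < v i) :
    IsUnit (diagonal fun i => √(v i)).det := by
  rw [det_diagonal]
  exact (Finset.prod_pos fun i _ => Real.sqrt_pos.2 (hv i)).ne'.isUnit

section RowSpaceProj

variable [Fintype m] [DecidableEq m]

noncomputable def rowSpaceProj [CommRing R] [StarRing R] (K : Matrix m ι R) : Matrix ι ι R :=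
  Kᴴ * (K * Kᴴ)⁻¹ * K

variable [CommRing R] [StarRing R]

theorem mul_rowSpaceProj {K : Matrix m ι R} (hK : IsUnit (K * Kᴴ)) :
    K * rowSpaceProj K = K := by
  simp only [rowSpaceProj, ← Matrix.mul_assoc]
  rw [mul_nonsing_inv _ ((isUnit_iff_isUnit_det _).mp hK), Matrix.one_mul]

theorem isStarProjection_rowSpaceProj {K : Matrix m ι R} (hK : IsUnit (K * Kᴴ)) :
    IsStarProjection (rowSpaceProj K) where
  isIdempotentElem := by
    nth_rw 1 [IsIdempotentElem, rowSpaceProj]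
    rw [Matrix.mul_assoc, mul_rowSpaceProj hK, rowSpaceProj]
  isSelfAdjoint := by
    rw [IsSelfAdjoint, star_eq_conjTranspose, rowSpaceProj, conjTranspose_mul, conjTranspose_mul,
      conjTranspose_nonsing_inv, conjTranspose_mul, conjTranspose_conjTranspose, Matrix.mul_assoc]

theorem mul_rowSpaceProj_sub_one_mul [DecidableEq ι] (C : Matrix m ι R) {E : Matrix ι ι R}
    (hE : E.IsHermitian) :
    E * (rowSpaceProj (C * E) - 1) * E =
      E * E * Cᴴ * (C * (E * E) * Cᴴ)⁻¹ * C * (E * E) - E * E := by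
  simp only [rowSpaceProj, conjTranspose_mul, hE.eq, Matrix.mul_sub, Matrix.sub_mul, Matrix.one_mul,
    Matrix.mul_assoc]

theorem rank_rowSpaceProj {𝕂 : Type*} [Field 𝕂] [StarRing 𝕂] {K : Matrix m ι 𝕂}
    (hK : IsUnit (K * Kᴴ)) : (rowSpaceProj K).rank = Fintype.card m := by
  have hK_rank : K.rank = Fintype.card m :=
    le_antisymm K.rank_le_card_height
      ((rank_of_isUnit _ hK).symm.trans_le (rank_mul_le_left _ _))
  refine le_antisymm ((rank_mul_le_right _ _).trans hK_rank.le) ?_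
  calc Fintype.card m = (K * rowSpaceProj K).rank := by rw [mul_rowSpaceProj hK, hK_rank]
    _ ≤ (rowSpaceProj K).rank := rank_mul_le_right _ _

theorem rank_conjTranspose_mul_rowSpaceProj_sub_one_mul_add_card [DecidableEq ι] {𝕂 : Type*}
    [Field 𝕂] [StarRing 𝕂] {K : Matrix m ι 𝕂} (hK : IsUnit (K * Kᴴ)) {G : Matrix ι ι 𝕂}
    (hG : IsUnit G.det) :
    (Gᴴ * (rowSpaceProj K - 1) * G).rank + Fintype.card m = Fintype.card ι := by
  rw [rank_mul_eq_left_of_isUnit_det G _ hG,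
    rank_mul_eq_right_of_isUnit_det Gᴴ _ (by rw [det_conjTranspose]; exact hG.star), ← neg_sub,
    rank_neg, ← rank_rowSpaceProj hK, rank_one_sub_add_rank (isStarProjection_rowSpaceProj hK).1]

theorem posSemidef_neg_conjTranspose_mul_rowSpaceProj_sub_one_mul [DecidableEq ι] {𝕜 : Type*}
    [RCLike 𝕜] {K : Matrix m ι 𝕜} (hK : IsUnit (K * Kᴴ)) (G : Matrix ι ι 𝕜) :
    (-(Gᴴ * (rowSpaceProj K - 1) * G)).PosSemidef := by
  rw [← Matrix.neg_mul, ← Matrix.mul_neg, neg_sub]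
  exact (isStarProjection_rowSpaceProj hK).one_sub.nonneg.posSemidef.conjTranspose_mul_mul_same G

end RowSpaceProj

namespace IsHermitian

variable [DecidableEq ι]

theorem charpoly_mul_mul_self [CommRing R] [StarRing R] {F : Matrix ι ι R} (hF : F.IsHermitian)
    (A : Matrix ι ι R) : (A * (F * F)).charpoly = (Fᴴ * A * F).charpoly := by
  rw [← Matrix.mul_assoc, charpoly_mul_comm, hF.eq, Matrix.mul_assoc]

theorem eigenvalues_nonpos {𝕜 : Type*} [RCLike 𝕜] {A : Matrix ι ι 𝕜} (hA : A.IsHermitian)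
    (hneg : (-A).PosSemidef) (i : ι) : hA.eigenvalues i ≤ 0 := by
  have h := (RCLike.nonneg_iff.mp (hneg.dotProduct_mulVec_nonneg (hA.eigenvectorBasis i))).1
  rw [neg_mulVec, dotProduct_neg, map_neg] at h
  rw [hA.eigenvalues_eq i]
  linarith

theorem roots_charpoly_map_complex {A : Matrix ι ι ℝ} (hA : A.IsHermitian) :
    (A.charpoly.map (algebraMap ℝ ℂ)).roots =
      Finset.univ.val.map fun i => (hA.eigenvalues i : ℂ) := by
  rw [hA.splits_charpoly.roots_map_of_injective (algebraMap ℝ ℂ).injective,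
    hA.roots_charpoly_eq_eigenvalues, Multiset.map_map]
  rfl

theorem rootMultiplicity_zero_charpoly_map_complex_add_rank {A : Matrix ι ι ℝ}
    (hA : A.IsHermitian) :
    (A.charpoly.map (algebraMap ℝ ℂ)).rootMultiplicity 0 + A.rank = Fintype.card ι := by
  rw [← count_roots, hA.roots_charpoly_map_complex, Multiset.count_map,
    hA.rank_eq_card_non_zero_eigs, Fintype.card_subtype]
  simp only [eq_comm (a := (0 : ℂ)), Complex.ofReal_eq_zero]
  exact Finset.card_filter_add_card_filter_not _ |>.trans Finset.card_univ

theorem im_eq_zero_and_re_neg_of_mem_roots {A : Matrix ι ι ℝ} (hA : A.IsHermitian)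
    (hneg : (-A).PosSemidef) {z : ℂ} (hz : z ∈ (A.charpoly.map (algebraMap ℝ ℂ)).roots)
    (hz0 : z ≠ 0) : z.im = 0 ∧ z.re < 0 := by
  rw [hA.roots_charpoly_map_complex, Multiset.mem_map] at hz
  obtain ⟨i, -, rfl⟩ := hz
  refine ⟨Complex.ofReal_im _, ?_⟩
  rw [Complex.ofReal_re]
  exact (hA.eigenvalues_nonpos hneg i).lt_of_ne (by exact_mod_cast hz0)

end IsHermitian

end Matrix

/-- With `D = diagonal d`, `D̄ = diagonal q` (all entries positive) and
`C·D·Cᵀ` invertible, the Jacobian `J = B·D̄`, where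
`B = D·Cᵀ·(C·D·Cᵀ)⁻¹·C·D − D`, has the eigenvalue `0` with algebraic multiplicity
exactly `n`, and its remaining `M − n` eigenvalues (counted with multiplicity as roots
of its characteristic polynomial, viewed over `ℂ`) are all negative real numbers. -/
theorem Jacobian_spectrum
    (n M : ℕ) (C : Matrix (Fin n) (Fin M) ℝ) (d q : Fin M → ℝ)
    (hd : ∀ m, 0 < d m) (hq : ∀ m, 0 < q m)
    (hinv : IsUnit (C * Matrix.diagonal d * Cᵀ)) :
    (((Matrix.diagonal d * Cᵀ * (C * Matrix.diagonal d * Cᵀ)⁻¹ * C * Matrix.diagonal d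
        - Matrix.diagonal d) * Matrix.diagonal q).charpoly.map
          (algebraMap ℝ ℂ)).rootMultiplicity 0 = n
    ∧ ∀ z ∈ (((Matrix.diagonal d * Cᵀ * (C * Matrix.diagonal d * Cᵀ)⁻¹ * C * Matrix.diagonal d
        - Matrix.diagonal d) * Matrix.diagonal q).charpoly.map (algebraMap ℝ ℂ)).roots,
        z ≠ 0 → z.im = 0 ∧ z.re < 0 := by
  have hE : (diagonal fun m => √(d m)).IsHermitian := isHermitian_diagonal _
  have hF : (diagonal fun m => √(q m)).IsHermitian := isHermitian_diagonal _
  rw [← diagonal_sqrt_mul_self fun m => (hd m).le,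
    ← conjTranspose_eq_transpose_of_trivial] at hinv ⊢
  rw [← diagonal_sqrt_mul_self fun m => (hq m).le, ← mul_rowSpaceProj_sub_one_mul C hE]
  set E : Matrix (Fin M) (Fin M) ℝ := diagonal fun m => √(d m)
  set F : Matrix (Fin M) (Fin M) ℝ := diagonal fun m => √(q m)
  set G := E * F
  have hK : IsUnit (C * E * (C * E)ᴴ) := by
    rwa [conjTranspose_mul, hE.eq, ← Matrix.mul_assoc, Matrix.mul_assoc C]
  have hG : IsUnit G.det := by
    rw [det_mul]; exact (isUnit_det_diagonal_sqrt hd).mul (isUnit_det_diagonal_sqrt hq)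
  set S := Gᴴ * (rowSpaceProj (C * E) - 1) * G
  have hchar : (E * (rowSpaceProj (C * E) - 1) * E * (F * F)).charpoly = S.charpoly := by
    rw [hF.charpoly_mul_mul_self]
    simp only [S, G, conjTranspose_mul, hE.eq, hF.eq, Matrix.mul_assoc]
  have hS_neg : (-S).PosSemidef :=
    posSemidef_neg_conjTranspose_mul_rowSpaceProj_sub_one_mul hK G
  have hS : S.IsHermitian := by simpa using hS_neg.isHermitian.neg
  have hrank : S.rank + n = M := by
    simpa only [Fintype.card_fin] using
      rank_conjTranspose_mul_rowSpaceProj_sub_one_mul_add_card hK hG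
  have hmult := hS.rootMultiplicity_zero_charpoly_map_complex_add_rank
  rw [Fintype.card_fin] at hmult
  rw [hchar]
  exact ⟨by omega, fun z hz hz0 => hS.im_eq_zero_and_re_neg_of_mem_roots hS_neg hz hz0⟩
end

section
/- The kernel of the Jacobian J = B·D̄ is the image under D̄⁻¹ of the column space of Cᵀ: for x ∈ ℝ^M, J·x = 0 if and only if there exists y ∈ ℝ^n with D̄·x = Cᵀ·y; in particular, the kernel of J has dimension n and is spanned by the columns of D̄⁻¹·Cᵀ. -/
open Matrix

/-- With `D = diagonal d`, `D̄ = diagonal q` (all entries positive) and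
`C·D·Cᵀ` invertible, the kernel of the Jacobian `J = B·D̄`, where
`B = D·Cᵀ·(C·D·Cᵀ)⁻¹·C·D − D`, is the image under `D̄⁻¹` of the column space of `Cᵀ`:
`J·x = 0` iff `D̄·x = Cᵀ·y` for some `y ∈ ℝ^n`; in particular the kernel of `J` has
dimension `n`. -/
theorem Jacobian_kernel
    (n M : ℕ) (C : Matrix (Fin n) (Fin M) ℝ) (d q : Fin M → ℝ)
    (hd : ∀ m, 0 < d m) (hq : ∀ m, 0 < q m)
    (hinv : IsUnit (C * Matrix.diagonal d * Cᵀ)) :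
    (∀ x : Fin M → ℝ,
      ((Matrix.diagonal d * Cᵀ * (C * Matrix.diagonal d * Cᵀ)⁻¹ * C * Matrix.diagonal d
        - Matrix.diagonal d) * Matrix.diagonal q) *ᵥ x = 0
      ↔ ∃ y : Fin n → ℝ, Matrix.diagonal q *ᵥ x = Cᵀ *ᵥ y)
    ∧ Module.finrank ℝ
        (LinearMap.ker ((Matrix.diagonal d * Cᵀ * (C * Matrix.diagonal d * Cᵀ)⁻¹ * C
          * Matrix.diagonal d - Matrix.diagonal d) * Matrix.diagonal q).mulVecLin) = n := by
  set D := Matrix.diagonal d with hD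
  set Q := Matrix.diagonal q with hQ
  set A := (C * D * Cᵀ)⁻¹ with hA
  have hdet : IsUnit (C * D * Cᵀ).det := (Matrix.isUnit_iff_isUnit_det _).mp hinv
  have hAinv : A * (C * D * Cᵀ) = 1 := Matrix.nonsing_inv_mul _ hdet
  have hAinv' : A * (C * (D * Cᵀ)) = 1 := by simpa [Matrix.mul_assoc] using hAinv
  have hDinj : Function.Injective (D *ᵥ ·) := by
    intro u v huv
    funext i
    have := congrFun huv i
    simp only [hD, Matrix.mulVec_diagonal] at this
    exact mul_left_cancel₀ (hd i).ne' this
  have key : ∀ x : Fin M → ℝ,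
      ((D * Cᵀ * A * C * D - D) * Q) *ᵥ x = 0 ↔ ∃ y : Fin n → ℝ, Q *ᵥ x = Cᵀ *ᵥ y := by
    intro x
    rw [Matrix.sub_mul, Matrix.sub_mulVec, sub_eq_zero]
    constructor
    · intro h
      refine ⟨(A * C * D * Q) *ᵥ x, ?_⟩
      apply hDinj
      show D *ᵥ (Q *ᵥ x) = D *ᵥ (Cᵀ *ᵥ ((A * C * D * Q) *ᵥ x))
      rw [Matrix.mulVec_mulVec, Matrix.mulVec_mulVec, Matrix.mulVec_mulVec, ← h]
      simp [Matrix.mul_assoc]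
    · rintro ⟨y, hy⟩
      rw [← Matrix.mulVec_mulVec x (D * Cᵀ * A * C * D) Q, ← Matrix.mulVec_mulVec x D Q, hy,
        Matrix.mulVec_mulVec, Matrix.mulVec_mulVec]
      simp [Matrix.mul_assoc, hAinv']
  refine ⟨key, ?_⟩
  have hrankC : C.rank = n := by
    have h1 : (C * D * Cᵀ).rank = n := by
      simpa using Matrix.rank_of_isUnit _ hinv
    have h2 : (C * D * Cᵀ).rank ≤ C.rank :=
      le_trans (Matrix.rank_mul_le_left _ _) (Matrix.rank_mul_le_left _ _)
    have h3 : C.rank ≤ n := by simpa using Matrix.rank_le_card_height C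
    omega
  have hrankCT : (Cᵀ).rank = n := by rw [Matrix.rank_transpose, hrankC]
  have hQdet : IsUnit Q.det := by
    rw [hQ, Matrix.det_diagonal]
    exact (Finset.prod_pos (fun i _ => hq i)).ne'.isUnit
  have hQinvertible : Invertible Q := Q.invertibleOfIsUnitDet hQdet
  let e : (Fin M → ℝ) ≃ₗ[ℝ] Fin M → ℝ := Q.toLinearEquiv' hQinvertible
  have he : ∀ v, e v = Q *ᵥ v := fun v => Matrix.toLin'_apply Q v
  have hker : LinearMap.ker ((D * Cᵀ * A * C * D - D) * Q).mulVecLin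
      = Submodule.comap (e : (Fin M → ℝ) →ₗ[ℝ] Fin M → ℝ) (LinearMap.range (Cᵀ).mulVecLin) := by
    ext x
    simp only [LinearMap.mem_ker, Matrix.mulVecLin_apply, Submodule.mem_comap,
      LinearMap.mem_range, Matrix.mulVecLin_apply, LinearEquiv.coe_coe, he]
    rw [key x]
    constructor
    · rintro ⟨y, hy⟩; exact ⟨y, hy.symm⟩
    · rintro ⟨y, hy⟩; exact ⟨y, hy.symm⟩
  rw [hker, Submodule.comap_equiv_eq_map_symm, LinearEquiv.finrank_map_eq]
  exact hrankCT
end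

section
/- Local stability on the Kirchhoff hyperplane: if x ∈ ℝ^M is nonzero, satisfies C·x = 0, and is an eigenvector of J = B·D̄ with real eigenvalue λ (i.e., J·x = λ·x), then λ < 0. Thus every perturbation respecting the Kirchhoff current law decays, so the steady state constrained by the Kirchhoff current law is locally stable. -/
open Matrix

/-- Local stability on the Kirchhoff hyperplane. With `D = diagonal d`,
`D̄ = diagonal q` (all entries positive) and `C·D·Cᵀ` invertible, set
`B = D·Cᵀ·(C·D·Cᵀ)⁻¹·C·D − D` and `J = B·D̄`. If `x ≠ 0` satisfies the Kirchhoff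
current law `C·x = 0` and is an eigenvector of `J` with real eigenvalue `λ`
(`J·x = λ·x`), then `λ < 0`. -/
theorem kirchhoff_eigenvalue_neg
    (n M : ℕ) (C : Matrix (Fin n) (Fin M) ℝ) (d q : Fin M → ℝ)
    (hd : ∀ m, 0 < d m) (hq : ∀ m, 0 < q m)
    (hinv : IsUnit (C * Matrix.diagonal d * Cᵀ))
    (x : Fin M → ℝ) (hx : x ≠ 0) (hKirchhoff : C *ᵥ x = 0) (lam : ℝ)
    (heig : ((Matrix.diagonal d * Cᵀ * (C * Matrix.diagonal d * Cᵀ)⁻¹ * C * Matrix.diagonal d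
        - Matrix.diagonal d) * Matrix.diagonal q) *ᵥ x = lam • x) :
    lam < 0 := by
  set Dm := Matrix.diagonal d with hDm
  set S := C * Dm * Cᵀ with hS
  set A := S⁻¹ with hA
  set y : Fin M → ℝ := Matrix.diagonal q *ᵥ x with hy
  set w : Fin n → ℝ := C *ᵥ (Dm *ᵥ y) with hw
  set u : Fin n → ℝ := A *ᵥ w with hu
  set r : Fin M → ℝ := y - Cᵀ *ᵥ u with hr
  have hdet : IsUnit S.det := (Matrix.isUnit_iff_isUnit_det S).mp hinv
  have hSA : S * A = 1 := Matrix.mul_nonsing_inv S hdet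
  have hDmT : Dmᵀ = Dm := Matrix.diagonal_transpose d
  -- eigen equation in terms of y
  have heig' : (Dm * Cᵀ * A * C * Dm - Dm) *ᵥ y = lam • x := by
    rw [hy, Matrix.mulVec_mulVec]; exact heig
  -- helper: y ⬝ᵥ (Dm *ᵥ v) = (Dm *ᵥ y) ⬝ᵥ v
  have hsym : ∀ (z v : Fin M → ℝ), z ⬝ᵥ (Dm *ᵥ v) = (Dm *ᵥ z) ⬝ᵥ v := by
    intro z v
    rw [Matrix.dotProduct_mulVec, ← Matrix.mulVec_transpose, hDmT]
  have hCT : ∀ (z : Fin M → ℝ) (v : Fin n → ℝ), z ⬝ᵥ (Cᵀ *ᵥ v) = (C *ᵥ z) ⬝ᵥ v := by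
    intro z v
    rw [Matrix.dotProduct_mulVec, ← Matrix.mulVec_transpose, Matrix.transpose_transpose]
  -- step: y ⬝ᵥ ((Dm*Cᵀ*A*C*Dm) *ᵥ y) = w ⬝ᵥ u
  have hPy : (Dm * Cᵀ * A * C * Dm) *ᵥ y = Dm *ᵥ (Cᵀ *ᵥ u) := by
    simp only [hu, hw, ← Matrix.mulVec_mulVec, Matrix.mul_assoc]
  have key : lam * (y ⬝ᵥ x) = w ⬝ᵥ u - y ⬝ᵥ (Dm *ᵥ y) := by
    have h1 : y ⬝ᵥ ((Dm * Cᵀ * A * C * Dm - Dm) *ᵥ y) = lam * (y ⬝ᵥ x) := by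
      rw [heig', dotProduct_smul]; ring_nf
    rw [← h1, Matrix.sub_mulVec, dotProduct_sub, hPy, hsym, hCT]
  -- r ⬝ᵥ (Dm *ᵥ r) = yDy − w⬝ᵥu
  have hSu : C *ᵥ (Dm *ᵥ (Cᵀ *ᵥ u)) = w := by
    rw [hu, Matrix.mulVec_mulVec, Matrix.mulVec_mulVec, Matrix.mulVec_mulVec, ← hS, hSA,
      Matrix.one_mulVec]
  have e2 : y ⬝ᵥ (Dm *ᵥ (Cᵀ *ᵥ u)) = w ⬝ᵥ u := by rw [hsym, hCT]
  have e3 : (Cᵀ *ᵥ u) ⬝ᵥ (Dm *ᵥ y) = w ⬝ᵥ u := by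
    rw [dotProduct_comm, hCT]
  have e4 : (Cᵀ *ᵥ u) ⬝ᵥ (Dm *ᵥ (Cᵀ *ᵥ u)) = w ⬝ᵥ u := by
    rw [dotProduct_comm, hCT, hSu]
  have hrDr : r ⬝ᵥ (Dm *ᵥ r) = y ⬝ᵥ (Dm *ᵥ y) - w ⬝ᵥ u := by
    rw [hr, Matrix.mulVec_sub, sub_dotProduct, dotProduct_sub,
      dotProduct_sub, e2, e3, e4]
    ring
  -- positivity of y ⬝ᵥ x
  have hym : ∀ m, y m = q m * x m := by
    intro m; rw [hy, Matrix.mulVec_diagonal]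
  have hyx : 0 < y ⬝ᵥ x := by
    obtain ⟨m0, hm0⟩ := Function.ne_iff.mp hx
    have : y ⬝ᵥ x = ∑ m, q m * (x m)^2 := by
      simp only [dotProduct, hym]; congr 1; ext m; ring
    rw [this]
    apply Finset.sum_pos' (fun m _ => mul_nonneg (hq m).le (sq_nonneg _))
    exact ⟨m0, Finset.mem_univ m0, mul_pos (hq m0) (lt_of_le_of_ne (sq_nonneg _) (Ne.symm (pow_ne_zero 2 hm0)))⟩
  -- r ≠ 0
  have hrne : r ≠ 0 := by
    intro h0
    have hyu : y = Cᵀ *ᵥ u := by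
      have := sub_eq_zero.mp (hr ▸ h0)
      exact this
    have : x ⬝ᵥ y = 0 := by
      rw [hyu, hCT, hKirchhoff, zero_dotProduct]
    rw [dotProduct_comm] at this
    linarith
  -- r ⬝ᵥ (Dm *ᵥ r) > 0
  have hrDr_pos : 0 < r ⬝ᵥ (Dm *ᵥ r) := by
    have : r ⬝ᵥ (Dm *ᵥ r) = ∑ m, d m * (r m)^2 := by
      simp only [dotProduct, hDm, Matrix.mulVec_diagonal]; congr 1; ext m; ring
    rw [this]
    obtain ⟨m0, hm0⟩ := Function.ne_iff.mp hrne
    apply Finset.sum_pos' (fun m _ => mul_nonneg (hd m).le (sq_nonneg _))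
    exact ⟨m0, Finset.mem_univ m0, mul_pos (hd m0) (lt_of_le_of_ne (sq_nonneg _) (Ne.symm (pow_ne_zero 2 hm0)))⟩
  have : lam * (y ⬝ᵥ x) < 0 := by rw [key]; linarith
  nlinarith
end
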